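/- Let k be an algebraically closed field of characteristic zero and let d ≥ 3. The polynomial x^d + y^d + 1 ∈ k[x,y] is irreducible; let K := Frac(k[x,y]/(x^d + y^d + 1)) be the function field of the Fermat curve X^d + Y^d + Z^d = 0, and let x denote the image of x in K. Then the extension K/k(x) is a Galois extension of degree d with cyclic Galois group. (Equivalently: the point (0:1:0) is an outer Galois point for the Fermat curve of degree d.) -/

import Mathlib

open MvPolynomial

/-- The dehomogenization `f(x,y) = F(x,y,1)` of a homogeneous polynomial in three variables. -/
noncomputable def dehom {k : Type*} [CommSemiring k] (F : MvPolynomial (Fin 3) k) :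
    MvPolynomial (Fin 2) k :=
  MvPolynomial.aeval ![MvPolynomial.X 0, MvPolynomial.X 1, 1] F

/-- `K`, together with elements `x y : K`, is (a copy of) the function field
`Frac(k[x,y]/(F(x,y,1)))` of the plane curve `{F = 0}`. -/
def IsFunctionFieldOf (k : Type*) {K : Type*} [Field k] [Field K] [Algebra k K]
    (F : MvPolynomial (Fin 3) k) (x y : K) : Prop :=
  IntermediateField.adjoin k {x, y} = ⊤ ∧
    ∀ g : MvPolynomial (Fin 2) k, MvPolynomial.aeval ![x, y] g = 0 ↔ dehom F ∣ g

/-- The projection with fibre field `k(u)` is Galois of degree `d`. -/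
def IsGaloisProjection (k : Type*) {K : Type*} [Field k] [Field K] [Algebra k K]
    (u : K) (d : ℕ) : Prop :=
  IsGalois (IntermediateField.adjoin k {u}) K ∧
    Module.finrank (IntermediateField.adjoin k {u}) K = d

/-- The Galois group of the projection corresponding to `k(u) ⊆ K`, viewed as the subgroup
of `Aut_k(K)` fixing `k(u)` elementwise. -/
def galGroup (k : Type*) {K : Type*} [Field k] [Field K] [Algebra k K] (u : K) :
    Subgroup (K ≃ₐ[k] K) :=
  (IntermediateField.adjoin k {u}).fixingSubgroup

/-- The Fermat polynomial `X^d + Y^d + Z^d`. -/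
noncomputable def fermatPoly (k : Type*) [CommSemiring k] (d : ℕ) : MvPolynomial (Fin 3) k :=
  MvPolynomial.X 0 ^ d + MvPolynomial.X 1 ^ d + MvPolynomial.X 2 ^ d

/-- `F` is projectively equivalent to the Fermat curve of degree `d`:
`F((X,Y,Z)·A) = c (X^d+Y^d+Z^d)` for some invertible matrix `A` and `c ≠ 0`. -/
def ProjEquivToFermat {k : Type*} [Field k] (d : ℕ) (F : MvPolynomial (Fin 3) k) : Prop :=
  ∃ A : Matrix (Fin 3) (Fin 3) k, IsUnit A.det ∧ ∃ c : k, c ≠ 0 ∧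
    MvPolynomial.aeval (fun i => ∑ j, MvPolynomial.C (A j i) * MvPolynomial.X j) F =
      MvPolynomial.C c * fermatPoly k d

/-- `K` is not isomorphic, as a `k`-algebra, to the rational function field `k(t)`. -/
noncomputable def NotRational (k K : Type*) [Field k] [Field K] [Algebra k K] : Prop :=
  ¬ Nonempty (K ≃ₐ[k] RatFunc k)

/-! Over `F = k(x)` the field `K = F(y)` is generated by a root of `T^d + (x^d + 1)`, and a
primitive `d`-th root of unity lies in `k ⊆ F`, so by Kummer theory `K/F` is cyclic Galois as soon
as `y` has degree `d` over `F`. A nonzero polynomial over `F` killing `y` can be cleared of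
denominators to one in `k[x][T]`, which then lies in the kernel of `k[X₀, X₁] → K`; that kernel
is generated by `X₁^d + X₀^d + 1`, monic of degree `d` in `X₁`. The same description of the kernel
shows that `x^d + y^d + 1` is prime. -/

open scoped Polynomial IntermediateField

/-- The identification `k[X₀, X₁] = k[X₀][X₁]`, with `X₁` as the outer variable. -/
noncomputable def polyPolyToMv (k : Type*) [CommSemiring k] : k[X][X] →+* MvPolynomial (Fin 2) k :=
  Polynomial.eval₂RingHom (Polynomial.eval₂RingHom C (X 0)) (X 1)

noncomputable def mvToPolyPoly (k : Type*) [CommSemiring k] :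
    MvPolynomial (Fin 2) k →+* k[X][X] :=
  eval₂Hom (Polynomial.C.comp Polynomial.C) ![Polynomial.C Polynomial.X, Polynomial.X]

section Bivariate

variable {k : Type*} [CommSemiring k]

theorem mvToPolyPoly_polyPolyToMv (P : k[X][X]) : mvToPolyPoly k (polyPolyToMv k P) = P := by
  suffices (mvToPolyPoly k).comp (polyPolyToMv k) = RingHom.id _ from DFunLike.congr_fun this P
  refine Polynomial.ringHom_ext (fun q => ?_) (by simp [polyPolyToMv, mvToPolyPoly])
  suffices (mvToPolyPoly k).comp (Polynomial.eval₂RingHom C (X 0)) = Polynomial.C by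
    simpa [polyPolyToMv] using DFunLike.congr_fun this q
  exact Polynomial.ringHom_ext (fun a => by simp [mvToPolyPoly]) (by simp [mvToPolyPoly])

theorem aeval_polyPolyToMv {K : Type*} [CommSemiring K] [Algebra k K] (x y : K) (P : k[X][X]) :
    aeval ![x, y] (polyPolyToMv k P) = P.eval₂ (Polynomial.aeval x).toRingHom y := by
  suffices ((aeval ![x, y]).toRingHom.comp (polyPolyToMv k)) =
      Polynomial.eval₂RingHom (Polynomial.aeval x).toRingHom y from DFunLike.congr_fun this P
  refine Polynomial.ringHom_ext (fun q => ?_) (by simp [polyPolyToMv])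
  suffices (aeval ![x, y]).toRingHom.comp (Polynomial.eval₂RingHom C (X 0)) =
      (Polynomial.aeval x).toRingHom by simpa [polyPolyToMv] using DFunLike.congr_fun this q
  exact Polynomial.ringHom_ext (fun a => by simp) (by simp)

theorem mvToPolyPoly_dehom_fermatPoly (d : ℕ) :
    mvToPolyPoly k (dehom (fermatPoly k d)) =
      Polynomial.X ^ d + Polynomial.C (Polynomial.X ^ d + 1) := by
  simp only [dehom, fermatPoly, mvToPolyPoly, map_add, map_pow, map_one, aeval_X, eval₂Hom_X',
    Matrix.cons_val_zero, Matrix.cons_val_one, Matrix.cons_val_two, Matrix.head_cons,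
    Matrix.tail_cons]
  ring

end Bivariate

theorem dehom_fermatPoly_ne_zero {k : Type*} [CommRing k] [Nontrivial k] {d : ℕ} (hd : d ≠ 0) :
    dehom (fermatPoly k d) ≠ 0 := fun h => by
  have h' := congrArg (mvToPolyPoly k) h
  rw [mvToPolyPoly_dehom_fermatPoly, map_zero] at h'
  exact Polynomial.X_pow_add_C_ne_zero (Nat.pos_of_ne_zero hd) _ h'

namespace IsFunctionFieldOf

variable {k K : Type*} [Field k] [Field K] [Algebra k K] {x y : K}

theorem prime_dehom {F : MvPolynomial (Fin 3) k} (hff : IsFunctionFieldOf k F x y)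
    (hF : dehom F ≠ 0) : Prime (dehom F) := by
  have hker : Ideal.span {dehom F} = RingHom.ker (aeval ![x, y]) := by
    ext g
    rw [Ideal.mem_span_singleton, RingHom.mem_ker, hff.2]
  rw [← Ideal.span_singleton_prime hF, hker]
  exact RingHom.ker_isPrime _

variable {d : ℕ} (hff : IsFunctionFieldOf k (fermatPoly k d) x y)
include hff

theorem le_natDegree_of_eval₂_eq_zero {P : k[X][X]} (hP : P ≠ 0)
    (h : P.eval₂ (Polynomial.aeval x).toRingHom y = 0) : d ≤ P.natDegree := by
  have hdvd := map_dvd (mvToPolyPoly k) ((hff.2 _).mp ((aeval_polyPolyToMv x y P).trans h))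
  rw [mvToPolyPoly_polyPolyToMv, mvToPolyPoly_dehom_fermatPoly] at hdvd
  rw [← Polynomial.natDegree_X_pow_add_C (n := d) (r := (Polynomial.X ^ d + 1 : k[X]))]
  exact Polynomial.natDegree_le_of_dvd hdvd hP

theorem le_natDegree_of_aeval_adjoin_eq_zero {p : (Algebra.adjoin k {x})[X]} (hp : p ≠ 0)
    (h : Polynomial.aeval y p = 0) : d ≤ p.natDegree := by
  let f : k[X] →ₐ[k] Algebra.adjoin k {x} :=
    Polynomial.aeval ⟨x, Algebra.self_mem_adjoin_singleton k x⟩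
  have hf : Function.Surjective f := by
    rintro ⟨r, hr⟩
    obtain ⟨q, rfl⟩ := (Algebra.adjoin_singleton_eq_range_aeval k x ▸ hr :)
    exact ⟨q, Subtype.ext (Polynomial.aeval_subalgebra_coe q _ _)⟩
  obtain ⟨P, hPp, hdeg⟩ :=
    Polynomial.exists_natDegree_eq_of_mem_lifts (Polynomial.mem_lifts_of_surjective hf p)
  rw [← hdeg]
  refine hff.le_natDegree_of_eval₂_eq_zero (fun hP0 => hp ?_) ?_
  · rw [← hPp, hP0, Polynomial.map_zero]
  · rw [← h, ← hPp, Polynomial.aeval_def, Polynomial.eval₂_map]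
    congr 1
    ext <;> simp [f]

open IntermediateField.algebraAdjoinAdjoin in
theorem le_natDegree_of_aeval_eq_zero {p : k⟮x⟯[X]} (hp : p ≠ 0)
    (h : Polynomial.aeval y p = 0) : d ≤ p.natDegree := by
  set q := IsLocalization.integerNormalization (nonZeroDivisors (Algebra.adjoin k {x})) p
  have hq : q ≠ 0 := IsFractionRing.integerNormalization_eq_zero_iff.not.mpr hp
  calc d ≤ q.natDegree := hff.le_natDegree_of_aeval_adjoin_eq_zero hq
        (IsLocalization.integerNormalization_aeval_eq_zero _ p h)
    _ ≤ p.natDegree := Polynomial.le_natDegree_of_mem_supp _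
        (IsLocalization.integerNormalization_support _ p
          (Polynomial.natDegree_mem_support_of_nonzero hq))

theorem pow_mem_range_algebraMap : y ^ d ∈ Set.range (algebraMap k⟮x⟯ K) := by
  have hrel : x ^ d + y ^ d + 1 = 0 := by simpa [dehom, fermatPoly] using (hff.2 _).mpr dvd_rfl
  have hx : x ∈ k⟮x⟯ := IntermediateField.mem_adjoin_simple_self k x
  exact ⟨⟨-(x ^ d + 1), neg_mem (add_mem (pow_mem hx d) (one_mem _))⟩, by
    show -(x ^ d + 1) = y ^ d
    linear_combination -hrel⟩

theorem adjoin_adjoin_eq_top : k⟮x⟯⟮y⟯ = ⊤ := by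
  apply IntermediateField.restrictScalars_injective k
  rw [IntermediateField.adjoin_simple_adjoin_simple, IntermediateField.restrictScalars_top]
  exact hff.1

end IsFunctionFieldOf

theorem finrank_eq_and_isGalois_and_isCyclic_of_adjoin_eq_top {F L : Type*} [Field F] [Field L]
    [Algebra F L] {n : ℕ} (hn : (primitiveRoots n F).Nonempty) {α : L} (hα : F⟮α⟯ = ⊤)
    (hpow : α ^ n ∈ Set.range (algebraMap F L))
    (hmin : ∀ p : F[X], p ≠ 0 → Polynomial.aeval α p = 0 → n ≤ p.natDegree) :
    Module.finrank F L = n ∧ IsGalois F L ∧ IsCyclic Gal(L/F) := by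
  have hn0 : n ≠ 0 := by rintro rfl; simp at hn
  obtain ⟨a, ha⟩ := hpow
  have hint : IsIntegral F α :=
    ⟨_, Polynomial.monic_X_pow_sub_C a hn0, by simp [ha]⟩
  have hfin : Module.finrank F L = n := by
    rw [← IntermediateField.finrank_top', ← hα, IntermediateField.adjoin.finrank hint]
    refine le_antisymm ?_ (hmin _ (minpoly.ne_zero hint) (minpoly.aeval F α))
    have hdvd : minpoly F α ∣ Polynomial.X ^ n - Polynomial.C a := minpoly.dvd F α (by simp [ha])
    simpa using Polynomial.natDegree_le_of_dvd hdvd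
      (Polynomial.X_pow_sub_C_ne_zero (Nat.pos_of_ne_zero hn0) a)
  have : FiniteDimensional F L := Module.finite_of_finrank_pos (hfin ▸ Nat.pos_of_ne_zero hn0)
  rw [← hfin] at hn ha
  have kummer : (∃ β : L, β ^ Module.finrank F L ∈ Set.range (algebraMap F L) ∧ F⟮β⟯ = ⊤) →
      IsGalois F L ∧ IsCyclic Gal(L/F) :=
    ((isCyclic_tfae F L hn).out 2 0).mp
  exact ⟨hfin, kummer ⟨α, ⟨a, ha⟩, hα⟩⟩

theorem primitiveRoots_nonempty_of_isAlgClosed (k : Type*) {F : Type*} [Field k] [IsAlgClosed k]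
    [CharZero k] [Field F] [Algebra k F] {n : ℕ} (hn : n ≠ 0) : (primitiveRoots n F).Nonempty := by
  have : NeZero (n : k) := ⟨Nat.cast_ne_zero.mpr hn⟩
  obtain ⟨ζ, hζ⟩ := HasEnoughRootsOfUnity.exists_primitiveRoot k n
  exact ⟨algebraMap k F ζ, (mem_primitiveRoots (Nat.pos_of_ne_zero hn)).mpr
    (hζ.map_of_injective (algebraMap k F).injective)⟩

/-- The polynomial `x^d + y^d + 1` is irreducible, and the point `(0:1:0)` is
an outer Galois point for the Fermat curve of degree `d ≥ 3`: the extension `K/k(x)` of the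
function field `K = Frac(k[x,y]/(x^d+y^d+1))` over `k(x)` is Galois of degree `d` with cyclic
Galois group. -/
theorem fermat_outer_galois_point_x
    {k K : Type*} [Field k] [IsAlgClosed k] [CharZero k] [Field K] [Algebra k K]
    (d : ℕ) (hd : 3 ≤ d) (x y : K)
    (hff : IsFunctionFieldOf k (fermatPoly k d) x y) :
    Irreducible (dehom (fermatPoly k d)) ∧
    IsGalois (IntermediateField.adjoin k ({x} : Set K)) K ∧
    Module.finrank (IntermediateField.adjoin k ({x} : Set K)) K = d ∧
    IsCyclic (galGroup k x) := by
  have hd0 : d ≠ 0 := by omega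
  obtain ⟨hfin, hgal, hcyc⟩ := finrank_eq_and_isGalois_and_isCyclic_of_adjoin_eq_top
    (primitiveRoots_nonempty_of_isAlgClosed k hd0) hff.adjoin_adjoin_eq_top
    hff.pow_mem_range_algebraMap (fun _ => hff.le_natDegree_of_aeval_eq_zero)
  exact ⟨(hff.prime_dehom (dehom_fermatPoly_ne_zero hd0)).irreducible, hgal, hfin,
    isCyclic_of_surjective _ (IntermediateField.fixingSubgroupEquiv _).symm.surjective⟩
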